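/- arXiv:2411.11077 — 3 statements merged into one kernel-verified Lean document; each statement's English description precedes it below -/
import Mathlib

section
/- Let G be a finite unweighted graph and let c₁ ≤ c₂ ≤ ⋯ ≤ c_n be the min-max eigenvalues of the signless 1-Laplacian Δ₁⁺. Suppose x^k is an eigenvector of Δ₁⁺ with eigenvalue c_k, and suppose r ≥ 1 is such that c_k < c_{k+r} (i.e., the multiplicity of c_k starting at index k is at most r). Then the number S(x^k) of nodal domains of x^k satisfies 1 ≤ S(x^k) ≤ k + r − 1. -/
open Finset

noncomputable section

/-- The set-valued sign function: `{1}` if `t > 0`, `{-1}` if `t < 0`, `[-1,1]` if `t = 0`. -/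
def Sgn (t : ℝ) : Set ℝ := if 0 < t then {1} else if t < 0 then {-1} else Set.Icc (-1) 1

variable {n : ℕ}

/-- The degree `d_i` of vertex `i` (unit edge weights), as a real number. -/
def degR (G : SimpleGraph (Fin n)) [DecidableRel G.Adj] (i : Fin n) : ℝ := (G.degree i : ℝ)

/-- `vol(V) = Σ_i d_i`. -/
def volV (G : SimpleGraph (Fin n)) [DecidableRel G.Adj] : ℝ := ∑ i, degR G i

/-- `I⁺(x) = Σ_{{i,j} ∈ E} |x_i + x_j|`. -/
def IplusU (G : SimpleGraph (Fin n)) [DecidableRel G.Adj] (x : Fin n → ℝ) : ℝ :=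
  (∑ i, ∑ j, if G.Adj i j then |x i + x j| else 0) / 2

/-- `(λ, x)` with `x ≠ 0` is an eigenpair of the signless 1-Laplacian `Δ₁⁺`:
there are `z_{ij} ∈ Sgn(x_i + x_j)` with `z_{ij} = z_{ji}` and `v_i ∈ Sgn(x_i)` such that
`Σ_{j ∼ i} z_{ij} = λ d_i v_i` for all `i`. -/
def IsEigenSignless (G : SimpleGraph (Fin n)) [DecidableRel G.Adj]
    (lam : ℝ) (x : Fin n → ℝ) : Prop :=
  x ≠ 0 ∧ ∃ z : Fin n → Fin n → ℝ,
    (∀ i j, G.Adj i j → z i j ∈ Sgn (x i + x j)) ∧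
    (∀ i j, z i j = z j i) ∧
    ∃ v : Fin n → ℝ, (∀ i, v i ∈ Sgn (x i)) ∧
      ∀ i, (∑ j, if G.Adj i j then z i j else 0) = lam * degR G i * v i

/-- `D` is the vertex set of a connected component of the subgraph of `G` induced by `P`. -/
def IsCompIn (G : SimpleGraph (Fin n)) (P : Set (Fin n)) (D : Set (Fin n)) : Prop :=
  ∃ v ∈ P, D = {u | Relation.ReflTransGen (fun a b => G.Adj a b ∧ a ∈ P ∧ b ∈ P) v u}

/-- The number `S(x)` of nodal domains of `x`: connected components of the support. -/
def nodalCount (G : SimpleGraph (Fin n)) (x : Fin n → ℝ) : ℕ :=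
  Set.ncard {D : Set (Fin n) | IsCompIn G {i | x i ≠ 0} D}

/-- There is a continuous odd nonvanishing map from `A` into `ℝᵐ ∖ {0}`. -/
def HasOddMap (A : Set (Fin n → ℝ)) (m : ℕ) : Prop :=
  ∃ f : (Fin n → ℝ) → (Fin m → ℝ),
    ContinuousOn f A ∧ (∀ x ∈ A, f (-x) = -f x) ∧ ∀ x ∈ A, f x ≠ 0

/-- `γ(A) ≥ k`, where `γ` is the Krasnoselskii genus: the least `m` admitting a
continuous odd nonvanishing map `A → ℝᵐ ∖ {0}` (with `γ(∅) = 0`, `γ(A) = +∞` if none). -/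
def GenusGe (A : Set (Fin n → ℝ)) (k : ℕ) : Prop := ∀ m, HasOddMap A m → k ≤ m

/-- The `k`-th min-max value of a functional `Φ`:
`inf { sup_{x ∈ A} Φ(x) : A ⊆ ℝⁿ∖{0} symmetric compact, γ(A) ≥ k }`. -/
def minimaxVal (Phi : (Fin n → ℝ) → ℝ) (k : ℕ) : ℝ :=
  sInf {r : ℝ | ∃ A : Set (Fin n → ℝ), IsCompact A ∧ (∀ x ∈ A, -x ∈ A) ∧
    (0 : Fin n → ℝ) ∉ A ∧ GenusGe A k ∧ r = sSup (Phi '' A)}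

/-- The Rayleigh quotient `I⁺(x) / Σ_i d_i |x_i|` of the signless 1-Laplacian. -/
def RayleighPlus (G : SimpleGraph (Fin n)) [DecidableRel G.Adj] (x : Fin n → ℝ) : ℝ :=
  IplusU G x / ∑ i, degR G i * |x i|

/-- The `k`-th min-max eigenvalue `c_k` of the (normalized) signless 1-Laplacian `Δ₁⁺`. -/
def ckSignless (G : SimpleGraph (Fin n)) [DecidableRel G.Adj] (k : ℕ) : ℝ :=
  minimaxVal (RayleighPlus G) k

namespace SL7

/-! ### Sign function basics -/

lemma sgn_mul {t z : ℝ} (h : z ∈ Sgn t) : z * t = |t| := by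
  unfold Sgn at h
  rcases lt_trichotomy 0 t with ht | ht | ht
  · rw [if_pos ht] at h; rw [Set.mem_singleton_iff] at h; subst h
    rw [one_mul, abs_of_pos ht]
  · subst ht; simp
  · rw [if_neg (by linarith), if_pos ht, Set.mem_singleton_iff] at h; subst h
    rw [abs_of_neg ht]; ring

/-! ### Nonnegativity and minimax basics -/

lemma rayleigh_nonneg (G : SimpleGraph (Fin n)) [DecidableRel G.Adj] (w : Fin n → ℝ) :
    0 ≤ RayleighPlus G w := by
  apply div_nonneg
  · apply div_nonneg _ (by norm_num)
    apply Finset.sum_nonneg; intro i _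
    apply Finset.sum_nonneg; intro j _
    split <;> positivity
  · apply Finset.sum_nonneg; intro i _
    have : (0:ℝ) ≤ degR G i := by unfold degR; positivity
    positivity

lemma minimax_nonneg (Phi : (Fin n → ℝ) → ℝ) (hPhi : ∀ w, 0 ≤ Phi w) (j : ℕ) :
    0 ≤ minimaxVal Phi j := by
  apply Real.sInf_nonneg
  rintro r ⟨A, -, -, -, -, rfl⟩
  apply Real.sSup_nonneg
  rintro y ⟨w, -, rfl⟩
  exact hPhi w

lemma minimax_bddBelow (Phi : (Fin n → ℝ) → ℝ) (hPhi : ∀ w, 0 ≤ Phi w) (j : ℕ) :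
    BddBelow {r : ℝ | ∃ A : Set (Fin n → ℝ), IsCompact A ∧ (∀ x ∈ A, -x ∈ A) ∧
      (0 : Fin n → ℝ) ∉ A ∧ GenusGe A j ∧ r = sSup (Phi '' A)} := by
  refine ⟨0, ?_⟩
  rintro r ⟨A, -, -, -, -, rfl⟩
  apply Real.sSup_nonneg
  rintro y ⟨w, -, rfl⟩
  exact hPhi w

lemma minimax_le (Phi : (Fin n → ℝ) → ℝ) (hPhi : ∀ w, 0 ≤ Phi w) (j : ℕ)
    (A : Set (Fin n → ℝ)) (hA : IsCompact A) (hsym : ∀ x ∈ A, -x ∈ A)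
    (h0 : (0 : Fin n → ℝ) ∉ A) (hg : GenusGe A j) (c : ℝ) (hc : 0 ≤ c)
    (hub : ∀ w ∈ A, Phi w ≤ c) : minimaxVal Phi j ≤ c := by
  have hmem : sSup (Phi '' A) ∈ {r : ℝ | ∃ A : Set (Fin n → ℝ), IsCompact A ∧
      (∀ x ∈ A, -x ∈ A) ∧ (0 : Fin n → ℝ) ∉ A ∧ GenusGe A j ∧ r = sSup (Phi '' A)} :=
    ⟨A, hA, hsym, h0, hg, rfl⟩
  have h1 : minimaxVal Phi j ≤ sSup (Phi '' A) := csInf_le (minimax_bddBelow Phi hPhi j) hmem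
  have h2 : sSup (Phi '' A) ≤ c := by
    apply Real.sSup_le _ hc
    rintro y ⟨w, hw, rfl⟩
    exact hub w hw
  linarith

lemma exists_genus_set (Phi : (Fin n → ℝ) → ℝ) (j : ℕ) (h : 0 < minimaxVal Phi j) :
    ∃ A : Set (Fin n → ℝ), IsCompact A ∧ (∀ x ∈ A, -x ∈ A) ∧
      (0 : Fin n → ℝ) ∉ A ∧ GenusGe A j := by
  by_contra hne
  push_neg at hne
  have : {r : ℝ | ∃ A : Set (Fin n → ℝ), IsCompact A ∧ (∀ x ∈ A, -x ∈ A) ∧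
      (0 : Fin n → ℝ) ∉ A ∧ GenusGe A j ∧ r = sSup (Phi '' A)} = ∅ := by
    ext r; simp only [Set.mem_setOf_eq, Set.mem_empty_iff_false, iff_false]
    rintro ⟨A, hA, hsym, h0, hg, -⟩
    exact hne A hA hsym h0 hg
  unfold minimaxVal at h
  rw [this, Real.sInf_empty] at h
  exact lt_irrefl _ h

section comps

variable {n : ℕ}

/-! ### Connected components of the support -/

def comp (G : SimpleGraph (Fin n)) (P : Set (Fin n)) (v : Fin n) : Set (Fin n) :=
  {u | Relation.ReflTransGen (fun a b => G.Adj a b ∧ a ∈ P ∧ b ∈ P) v u}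

lemma comp_mem_self (G : SimpleGraph (Fin n)) (P : Set (Fin n)) (v : Fin n) :
    v ∈ comp G P v := Relation.ReflTransGen.refl

lemma comp_subset (G : SimpleGraph (Fin n)) (P : Set (Fin n)) {v : Fin n} (hv : v ∈ P) :
    comp G P v ⊆ P := by
  intro u hu
  induction hu with
  | refl => exact hv
  | tail _ h ih => exact h.2.2

lemma comp_extend (G : SimpleGraph (Fin n)) (P : Set (Fin n)) {v i j : Fin n} (hv : v ∈ P)
    (hi : i ∈ comp G P v) (hadj : G.Adj i j) (hj : j ∈ P) : j ∈ comp G P v :=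
  Relation.ReflTransGen.tail hi ⟨hadj, comp_subset G P hv hi, hj⟩

lemma comp_eq_of_mem (G : SimpleGraph (Fin n)) (P : Set (Fin n)) {v u : Fin n}
    (hu : u ∈ comp G P v) : comp G P u = comp G P v := by
  have hsym : Symmetric (fun a b : Fin n => G.Adj a b ∧ a ∈ P ∧ b ∈ P) := by
    rintro a b ⟨h1, h2, h3⟩; exact ⟨h1.symm, h3, h2⟩
  have hRT : ∀ {a b : Fin n}, Relation.ReflTransGen (fun a b => G.Adj a b ∧ a ∈ P ∧ b ∈ P) a b →
      Relation.ReflTransGen (fun a b => G.Adj a b ∧ a ∈ P ∧ b ∈ P) b a := fun h => by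
    haveI : Std.Symm (fun a b : Fin n => G.Adj a b ∧ a ∈ P ∧ b ∈ P) := ⟨fun a b h => hsym h⟩
    exact Std.Symm.symm _ _ h
  ext w
  constructor
  · intro hw
    exact Relation.ReflTransGen.trans (hu : Relation.ReflTransGen _ v u) hw
  · intro hw
    exact Relation.ReflTransGen.trans (hRT hu) hw

lemma comp_eq_or_disjoint (G : SimpleGraph (Fin n)) (P : Set (Fin n)) {D₁ D₂ : Set (Fin n)}
    (h₁ : IsCompIn G P D₁) (h₂ : IsCompIn G P D₂) {i : Fin n} (hi₁ : i ∈ D₁) (hi₂ : i ∈ D₂) :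
    D₁ = D₂ := by
  obtain ⟨v₁, hv₁, rfl⟩ := h₁
  obtain ⟨v₂, hv₂, rfl⟩ := h₂
  have e₁ : comp G P i = comp G P v₁ := comp_eq_of_mem G P hi₁
  have e₂ : comp G P i = comp G P v₂ := comp_eq_of_mem G P hi₂
  show comp G P v₁ = comp G P v₂
  rw [← e₁, e₂]

/-! ### Global odd maps and descent -/

def Glob (n p : ℕ) : Prop :=
  ∃ Ψ : (Fin n → ℝ) → (Fin p → ℝ),
    ContinuousOn Ψ {w | w ≠ 0} ∧ (∀ w, Ψ (-w) = -Ψ w) ∧ ∀ w, w ≠ 0 → Ψ w ≠ 0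

lemma glob_self (n : ℕ) : Glob n n :=
  ⟨fun w => w, continuous_id.continuousOn, fun _ => rfl, fun _ hw => hw⟩

lemma glob_mono {n p q : ℕ} (h : Glob n p) (hpq : p ≤ q) : Glob n q := by
  obtain ⟨Ψ, hc, ho, hz⟩ := h
  refine ⟨fun w i => if h : (i : ℕ) < p then Ψ w ⟨i, h⟩ else 0, ?_, ?_, ?_⟩
  · apply continuousOn_pi.2
    intro i
    by_cases h : (i : ℕ) < p
    · simp only [dif_pos h]
      exact (continuousOn_pi.1 hc) _
    · simp only [dif_neg h]
      exact continuousOn_const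
  · intro w
    funext i
    by_cases h : (i : ℕ) < p
    · simp only [dif_pos h, ho w, Pi.neg_apply]
    · simp only [dif_neg h, Pi.neg_apply, neg_zero]
  · intro w hw hcontra
    apply hz w hw
    funext i
    have := congrFun hcontra ⟨(i : ℕ), lt_of_lt_of_le i.2 hpq⟩
    simpa only [dif_pos i.2, Fin.eta, Pi.zero_apply] using this


end comps

section descent

variable {N m : ℕ}

/-- ℓ¹ sum. -/
def l1 (a : Fin N → ℝ) : ℝ := ∑ s, |a s|

lemma l1_continuous : Continuous (l1 (N := N)) := by
  apply continuous_finset_sum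
  intro s _
  exact (continuous_apply s).abs

lemma l1_nonneg (a : Fin N → ℝ) : 0 ≤ l1 a :=
  Finset.sum_nonneg fun s _ => abs_nonneg _

lemma l1_pos {a : Fin N → ℝ} (ha : a ≠ 0) : 0 < l1 a := by
  obtain ⟨s, hs⟩ := Function.ne_iff.1 ha
  apply Finset.sum_pos' (fun t _ => abs_nonneg _)
  exact ⟨s, Finset.mem_univ s, abs_pos.2 (by simpa using hs)⟩

lemma l1_eq_zero {a : Fin N → ℝ} (ha : l1 a = 0) : a = 0 := by
  by_contra h
  exact absurd ha (ne_of_gt (l1_pos h))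

lemma l1_neg (a : Fin N → ℝ) : l1 (-a) = l1 a := by
  unfold l1; congr 1; funext s; simp

lemma l1_smul (c : ℝ) (a : Fin N → ℝ) : l1 (c • a) = |c| * l1 a := by
  unfold l1
  rw [Finset.mul_sum]
  congr 1; funext s
  simp [abs_mul]

/-- The ℓ¹ sphere. -/
def sphL1 (N : ℕ) : Set (Fin N → ℝ) := {t | l1 t = 1}

lemma sphL1_compact : IsCompact (sphL1 N) := by
  have hclosed : IsClosed (sphL1 N) := isClosed_eq l1_continuous continuous_const
  apply IsCompact.of_isClosed_subset (isCompact_closedBall (0 : Fin N → ℝ) 1) hclosed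
  intro t ht
  rw [Metric.mem_closedBall, dist_zero_right]
  rw [pi_norm_le_iff_of_nonneg (by norm_num)]
  intro s
  rw [Real.norm_eq_abs]
  calc |t s| ≤ l1 t := Finset.single_le_sum (fun i _ => abs_nonneg (t i)) (Finset.mem_univ s)
  _ = 1 := ht

lemma smul_mem_sphL1 {a : Fin N → ℝ} (ha : a ≠ 0) : (l1 a)⁻¹ • a ∈ sphL1 N := by
  have h := l1_pos ha
  show l1 _ = 1
  rw [l1_smul, abs_of_pos (by positivity), inv_mul_cancel₀ (ne_of_gt h)]

/-- The damped radial extension of a map on the ℓ¹ sphere. -/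
def Hmap (f : (Fin N → ℝ) → (Fin m → ℝ)) (a : Fin N → ℝ) : Fin m → ℝ :=
  (l1 a) • f ((l1 a)⁻¹ • a)

lemma Hmap_zero (f : (Fin N → ℝ) → (Fin m → ℝ)) : Hmap f 0 = 0 := by
  unfold Hmap
  have : l1 (0 : Fin N → ℝ) = 0 := by unfold l1; simp
  rw [this, zero_smul]

lemma Hmap_odd (f : (Fin N → ℝ) → (Fin m → ℝ))
    (hodd : ∀ t ∈ sphL1 N, f (-t) = -f t) (a : Fin N → ℝ) :
    Hmap f (-a) = -Hmap f a := by
  by_cases ha : a = 0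
  · subst ha; rw [neg_zero, Hmap_zero, neg_zero]
  · unfold Hmap
    rw [l1_neg, smul_neg, hodd _ (smul_mem_sphL1 ha), smul_neg]

lemma Hmap_ne_zero (f : (Fin N → ℝ) → (Fin m → ℝ))
    (hz : ∀ t ∈ sphL1 N, f t ≠ 0) {a : Fin N → ℝ} (ha : a ≠ 0) :
    Hmap f a ≠ 0 := by
  unfold Hmap
  exact smul_ne_zero (ne_of_gt (l1_pos ha)) (hz _ (smul_mem_sphL1 ha))

lemma Hmap_continuous (f : (Fin N → ℝ) → (Fin m → ℝ))
    (hf : ContinuousOn f (sphL1 N)) : Continuous (Hmap f) := by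
  obtain ⟨C, hC⟩ := sphL1_compact.exists_bound_of_continuousOn hf
  rw [continuous_iff_continuousAt]
  intro a₀
  by_cases ha₀ : a₀ = 0
  · subst ha₀
    rw [ContinuousAt, Hmap_zero]
    apply squeeze_zero_norm (a := fun a => l1 a * max C 0)
    · intro a
      by_cases ha : a = 0
      · subst ha
        rw [Hmap_zero]
        simp [l1]
      · unfold Hmap
        rw [norm_smul, Real.norm_eq_abs, abs_of_nonneg (l1_nonneg a)]
        apply mul_le_mul_of_nonneg_left _ (l1_nonneg a)
        exact le_trans (hC _ (smul_mem_sphL1 ha)) (le_max_left _ _)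
    · have : Continuous (fun a : Fin N → ℝ => l1 a * max C 0) :=
        l1_continuous.mul continuous_const
      have h0 : l1 (0 : Fin N → ℝ) * max C 0 = 0 := by simp [l1]
      simpa [h0] using this.tendsto 0
  · have hopen : IsOpen {a : Fin N → ℝ | a ≠ 0} := isOpen_compl_singleton
    apply ContinuousOn.continuousAt (s := {a : Fin N → ℝ | a ≠ 0})
    swap
    · exact hopen.mem_nhds ha₀
    have hmaps : Set.MapsTo (fun a : Fin N → ℝ => (l1 a)⁻¹ • a)
        {a : Fin N → ℝ | a ≠ 0} (sphL1 N) := fun a ha => smul_mem_sphL1 ha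
    have hinner : ContinuousOn (fun a : Fin N → ℝ => (l1 a)⁻¹ • a)
        {a : Fin N → ℝ | a ≠ 0} := by
      apply ContinuousOn.fun_smul
      · exact (l1_continuous.continuousOn).inv₀ fun a ha => ne_of_gt (l1_pos ha)
      · exact continuousOn_id
    exact (l1_continuous.continuousOn).smul (hf.comp hinner hmaps)

/-- Truncation to the first `N` coordinates. -/
def truncN (N p : ℕ) (u : Fin p → ℝ) : Fin N → ℝ :=
  fun s => if h : (s : ℕ) < p then u ⟨s, h⟩ else 0

/-- The coordinates from `N` on. -/
def tailN (N p : ℕ) (u : Fin p → ℝ) : Fin (p - N) → ℝ :=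
  fun j => if h : N + (j : ℕ) < p then u ⟨N + j, h⟩ else 0

lemma truncN_continuous : Continuous (truncN N p) := by
  apply continuous_pi
  intro s
  by_cases h : (s : ℕ) < p
  · simp only [truncN, dif_pos h]; exact continuous_apply _
  · simp only [truncN, dif_neg h]; exact continuous_const

lemma tailN_continuous : Continuous (tailN N p) := by
  apply continuous_pi
  intro j
  by_cases h : N + (j : ℕ) < p
  · simp only [tailN, dif_pos h]; exact continuous_apply _
  · simp only [tailN, dif_neg h]; exact continuous_const

lemma truncN_neg (u : Fin p → ℝ) : truncN N p (-u) = -truncN N p u := by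
  funext s
  by_cases h : (s : ℕ) < p
  · simp only [truncN, dif_pos h, Pi.neg_apply]
  · simp only [truncN, dif_neg h, Pi.neg_apply, neg_zero]

lemma tailN_neg (u : Fin p → ℝ) : tailN N p (-u) = -tailN N p u := by
  funext j
  by_cases h : N + (j : ℕ) < p
  · simp only [tailN, dif_pos h, Pi.neg_apply]
  · simp only [tailN, dif_neg h, Pi.neg_apply, neg_zero]

lemma trunc_tail_ne_zero {u : Fin p → ℝ} (hu : u ≠ 0) :
    truncN N p u ≠ 0 ∨ tailN N p u ≠ 0 := by
  obtain ⟨i, hi⟩ := Function.ne_iff.1 hu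
  by_cases h : (i : ℕ) < N
  · left
    intro hcontra
    have := congrFun hcontra ⟨(i : ℕ), h⟩
    simp only [truncN, Pi.zero_apply] at this
    rw [dif_pos i.2] at this
    simp only [Fin.eta] at this
    exact hi (by simpa using this)
  · right
    push_neg at h
    have hj : (i : ℕ) - N < p - N := by omega
    intro hcontra
    have := congrFun hcontra ⟨(i : ℕ) - N, hj⟩
    simp only [tailN, Pi.zero_apply] at this
    have harg : N + ((i : ℕ) - N) < p := by omega
    rw [dif_pos harg] at this
    have : u ⟨N + ((i : ℕ) - N), harg⟩ = 0 := by simpa using this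
    have heq : (⟨N + ((i : ℕ) - N), harg⟩ : Fin p) = i := by
      apply Fin.ext; simp; omega
    rw [heq] at this
    exact hi (by simpa using this)

lemma append_neg (u : Fin a → ℝ) (v : Fin b → ℝ) :
    Fin.append (-u) (-v) = -Fin.append u v := by
  funext i
  cases i using Fin.addCases with
  | left i => simp [Fin.append_left]
  | right i => simp [Fin.append_right]

lemma append_eq_zero {u : Fin a → ℝ} {v : Fin b → ℝ}
    (h : Fin.append u v = 0) : u = 0 ∧ v = 0 := by
  constructor
  · funext i
    have := congrFun h (Fin.castAdd b i)
    simpa [Fin.append_left] using this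
  · funext i
    have := congrFun h (Fin.natAdd a i)
    simpa [Fin.append_right] using this

lemma continuousOn_append {X : Type*} [TopologicalSpace X] {s : Set X}
    {F : X → Fin a → ℝ} {Gm : X → Fin b → ℝ}
    (hF : ContinuousOn F s) (hG : ContinuousOn Gm s) :
    ContinuousOn (fun w => Fin.append (F w) (Gm w)) s := by
  apply continuousOn_pi.2
  intro i
  cases i using Fin.addCases with
  | left i =>
    simp only [Fin.append_left]
    exact continuousOn_pi.1 hF i
  | right i =>
    simp only [Fin.append_right]
    exact continuousOn_pi.1 hG i

/-- Descent step: from a global odd nonvanishing map into `ℝᵖ` and an odd nonvanishing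
map on the `ℓ¹` sphere of `ℝᴺ` into `ℝᵐ`, build a global map into `ℝ^(m + (p-N))`. -/
lemma glob_step {p : ℕ} (f : (Fin N → ℝ) → (Fin m → ℝ))
    (hf : ContinuousOn f (sphL1 N)) (hodd : ∀ t ∈ sphL1 N, f (-t) = -f t)
    (hnz : ∀ t ∈ sphL1 N, f t ≠ 0) (hp : Glob n p) : Glob n (m + (p - N)) := by
  obtain ⟨Ψ, hΨc, hΨo, hΨz⟩ := hp
  refine ⟨fun w => Fin.append (Hmap f (truncN N p (Ψ w))) (tailN N p (Ψ w)), ?_, ?_, ?_⟩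
  · apply continuousOn_append
    · exact ((Hmap_continuous f hf).comp truncN_continuous).comp_continuousOn hΨc
    · exact tailN_continuous.comp_continuousOn hΨc
  · intro w
    show Fin.append (Hmap f (truncN N p (Ψ (-w)))) (tailN N p (Ψ (-w))) = _
    rw [hΨo w, truncN_neg, tailN_neg, Hmap_odd f hodd, append_neg]
  · intro w hw hcontra
    obtain ⟨h1, h2⟩ := append_eq_zero hcontra
    rcases trunc_tail_ne_zero (hΨz w hw) with h | h
    · exact Hmap_ne_zero f hnz h h1
    · exact h h2

lemma glob_descent (hm : m < N) (f : (Fin N → ℝ) → (Fin m → ℝ))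
    (hf : ContinuousOn f (sphL1 N)) (hodd : ∀ t ∈ sphL1 N, f (-t) = -f t)
    (hnz : ∀ t ∈ sphL1 N, f t ≠ 0) : Glob n m := by
  suffices h : ∀ p, Glob n p → Glob n m by
    exact h n (glob_self n)
  intro p
  induction p using Nat.strong_induction_on with
  | _ p IH =>
    intro hp
    by_cases hpm : p ≤ m
    · exact glob_mono hp hpm
    · push_neg at hpm
      have hq : m + (p - N) < p := by omega
      exact IH _ hq (glob_step f hf hodd hnz hp)

end descent

section eigen

variable (G : SimpleGraph (Fin n)) [DecidableRel G.Adj]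

/-- On each "closed" set `D` (closed under adjacency within the support), the eigen-equation
gives `I⁺(x·1_D) = λ · Σ_{i∈D} d_i |x_i|`. -/
lemma domain_identity (x : Fin n → ℝ) (lam : ℝ)
    (z : Fin n → Fin n → ℝ) (v : Fin n → ℝ)
    (hz_mem : ∀ i j, G.Adj i j → z i j ∈ Sgn (x i + x j))
    (hz_symm : ∀ i j, z i j = z j i)
    (hv : ∀ i, v i ∈ Sgn (x i))
    (heq : ∀ i, (∑ j, if G.Adj i j then z i j else 0) = lam * degR G i * v i)
    (D : Set (Fin n))
    (hDcl : ∀ i ∈ D, ∀ j : Fin n, G.Adj i j → x j ≠ 0 → j ∈ D) :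
    IplusU G (D.indicator x) = lam * ∑ i, degR G i * |D.indicator x i| := by
  classical
  set y : Fin n → ℝ := D.indicator x with hy
  have key : ∀ i j, G.Adj i j → |y i + y j| = z i j * (y i + y j) := by
    intro i j hadj
    have hz := hz_mem i j hadj
    rw [hy]
    by_cases hi : i ∈ D <;> by_cases hj : j ∈ D
    · rw [Set.indicator_of_mem hi, Set.indicator_of_mem hj]
      exact (sgn_mul hz).symm
    · have hxj : x j = 0 := by
        by_contra hne; exact hj (hDcl i hi j hadj hne)
      rw [Set.indicator_of_mem hi, Set.indicator_of_notMem hj]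
      rw [hxj] at hz
      exact (sgn_mul hz).symm
    · have hxi : x i = 0 := by
        by_contra hne; exact hi (hDcl j hj i hadj.symm hne)
      rw [Set.indicator_of_notMem hi, Set.indicator_of_mem hj]
      rw [hxi] at hz
      exact (sgn_mul hz).symm
    · rw [Set.indicator_of_notMem hi, Set.indicator_of_notMem hj]
      simp
  have hvy : ∀ i, v i * y i = |y i| := by
    intro i
    rw [hy]
    by_cases hi : i ∈ D
    · rw [Set.indicator_of_mem hi]; exact sgn_mul (hv i)
    · rw [Set.indicator_of_notMem hi]; simp
  have main : (∑ i, ∑ j, if G.Adj i j then |y i + y j| else 0)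
      = 2 * (lam * ∑ i, degR G i * |y i|) := by
    calc ∑ i, ∑ j, (if G.Adj i j then |y i + y j| else 0)
        = ∑ i, ∑ j, ((if G.Adj i j then z i j * y i else 0)
            + (if G.Adj i j then z i j * y j else 0)) := by
          apply Finset.sum_congr rfl; intro i _
          apply Finset.sum_congr rfl; intro j _
          by_cases hadj : G.Adj i j
          · rw [if_pos hadj, if_pos hadj, if_pos hadj, key i j hadj, mul_add]
          · rw [if_neg hadj, if_neg hadj, if_neg hadj, add_zero]
      _ = (∑ i, ∑ j, if G.Adj i j then z i j * y i else 0)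
          + (∑ i, ∑ j, if G.Adj i j then z i j * y j else 0) := by
          rw [← Finset.sum_add_distrib]
          apply Finset.sum_congr rfl; intro i _
          rw [Finset.sum_add_distrib]
      _ = (∑ i, ∑ j, if G.Adj i j then z i j * y i else 0)
          + (∑ i, ∑ j, if G.Adj i j then z i j * y i else 0) := by
          congr 1
          rw [Finset.sum_comm]
          apply Finset.sum_congr rfl; intro i _
          apply Finset.sum_congr rfl; intro j _
          rw [hz_symm j i]
          by_cases hadj : G.Adj i j
          · rw [if_pos hadj, if_pos hadj.symm]
          · rw [if_neg hadj, if_neg (fun h => hadj h.symm)]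
      _ = 2 * (∑ i, ∑ j, if G.Adj i j then z i j * y i else 0) := by ring
      _ = 2 * (∑ i, lam * (degR G i * |y i|)) := by
          congr 1
          apply Finset.sum_congr rfl; intro i _
          have hfac : ∑ j, (if G.Adj i j then z i j * y i else 0)
              = (∑ j, if G.Adj i j then z i j else 0) * y i := by
            rw [Finset.sum_mul]
            apply Finset.sum_congr rfl; intro j _
            rw [ite_mul, zero_mul]
          rw [hfac, heq i, mul_assoc (lam * degR G i), hvy i, mul_assoc]
      _ = 2 * (lam * ∑ i, degR G i * |y i|) := by rw [← Finset.mul_sum]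
  show (∑ i, ∑ j, if G.Adj i j then |y i + y j| else 0) / 2 = lam * ∑ i, degR G i * |y i|
  rw [main]; ring

end eigen

section cross

variable (G : SimpleGraph (Fin n)) [DecidableRel G.Adj]
variable {N : ℕ} (x : Fin n → ℝ) (g : Fin N → Set (Fin n))

/-- The cross-polytope parametrization built from the restrictions of `x` to the sets `g s`. -/
def crossMap (t : Fin N → ℝ) : Fin n → ℝ := fun i => ∑ s, t s * (g s).indicator x i

lemma crossMap_continuous : Continuous (crossMap x g) := by
  apply continuous_pi
  intro i
  apply continuous_finset_sum
  intro s _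
  exact (continuous_apply s).mul continuous_const

lemma crossMap_neg (t : Fin N → ℝ) : crossMap x g (-t) = -crossMap x g t := by
  funext i
  show ∑ s, (-t) s * _ = -∑ s, t s * _
  rw [← Finset.sum_neg_distrib]
  apply Finset.sum_congr rfl; intro s _
  simp [neg_mul]

lemma cross_abs (hdisj : ∀ (i : Fin n) (s s' : Fin N), i ∈ g s → i ∈ g s' → s = s')
    (t : Fin N → ℝ) (i : Fin n) :
    |crossMap x g t i| = ∑ s, |t s| * |(g s).indicator x i| := by
  classical
  by_cases hi : ∃ s, i ∈ g s
  · obtain ⟨s₀, hs₀⟩ := hi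
    have h1 : crossMap x g t i = t s₀ * x i := by
      show (∑ s, t s * (g s).indicator x i) = _
      rw [Finset.sum_eq_single s₀]
      · rw [Set.indicator_of_mem hs₀]
      · intro b _ hb
        have hnb : i ∉ g b := fun hmem => hb (hdisj i b s₀ hmem hs₀)
        rw [Set.indicator_of_notMem hnb, mul_zero]
      · intro h; exact absurd (Finset.mem_univ s₀) h
    have h2 : (∑ s, |t s| * |(g s).indicator x i|) = |t s₀| * |x i| := by
      rw [Finset.sum_eq_single s₀]
      · rw [Set.indicator_of_mem hs₀]
      · intro b _ hb
        have hnb : i ∉ g b := fun hmem => hb (hdisj i b s₀ hmem hs₀)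
        rw [Set.indicator_of_notMem hnb, abs_zero, mul_zero]
      · intro h; exact absurd (Finset.mem_univ s₀) h
    rw [h1, h2, abs_mul]
  · push_neg at hi
    have h1 : crossMap x g t i = 0 := by
      apply Finset.sum_eq_zero
      intro s _
      rw [Set.indicator_of_notMem (hi s), mul_zero]
    have h2 : (∑ s, |t s| * |(g s).indicator x i|) = 0 := by
      apply Finset.sum_eq_zero
      intro s _
      rw [Set.indicator_of_notMem (hi s), abs_zero, mul_zero]
    rw [h1, h2, abs_zero]

lemma cross_pair (hdisj : ∀ (i : Fin n) (s s' : Fin N), i ∈ g s → i ∈ g s' → s = s')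
    (hadjg : ∀ (i j : Fin n) (s s' : Fin N), G.Adj i j → i ∈ g s → j ∈ g s' → s = s')
    (t : Fin N → ℝ) (i j : Fin n) (hadj : G.Adj i j) :
    |crossMap x g t i + crossMap x g t j|
      = ∑ s, |t s| * |(g s).indicator x i + (g s).indicator x j| := by
  classical
  have eval_mem : ∀ (l : Fin n) (s₀ : Fin N), l ∈ g s₀ → crossMap x g t l = t s₀ * x l := by
    intro l s₀ hs₀
    show (∑ s, t s * (g s).indicator x l) = _
    rw [Finset.sum_eq_single s₀]
    · rw [Set.indicator_of_mem hs₀]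
    · intro b _ hb
      have hnb : l ∉ g b := fun hmem => hb (hdisj l b s₀ hmem hs₀)
      rw [Set.indicator_of_notMem hnb, mul_zero]
    · intro h; exact absurd (Finset.mem_univ s₀) h
  have eval_not : ∀ (l : Fin n), (∀ s, l ∉ g s) → crossMap x g t l = 0 := by
    intro l hl
    apply Finset.sum_eq_zero
    intro s _
    rw [Set.indicator_of_notMem (hl s), mul_zero]
  by_cases hi : ∃ s, i ∈ g s <;> by_cases hj : ∃ s, j ∈ g s
  · obtain ⟨s₀, hs₀⟩ := hi
    obtain ⟨s₁, hs₁⟩ := hj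
    have hss : s₀ = s₁ := hadjg i j s₀ s₁ hadj hs₀ hs₁
    have hs₁ : j ∈ g s₀ := by rw [hss]; exact hs₁
    rw [eval_mem i s₀ hs₀, eval_mem j s₀ hs₁]
    rw [Finset.sum_eq_single s₀]
    · rw [Set.indicator_of_mem hs₀, Set.indicator_of_mem hs₁, ← mul_add, abs_mul]
    · intro b _ hb
      have hnb : i ∉ g b := fun hmem => hb (hdisj i b s₀ hmem hs₀)
      have hnb' : j ∉ g b := fun hmem => hb (hdisj j b s₀ hmem hs₁)
      rw [Set.indicator_of_notMem hnb, Set.indicator_of_notMem hnb', add_zero, abs_zero,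
        mul_zero]
    · intro h; exact absurd (Finset.mem_univ s₀) h
  · push_neg at hj
    obtain ⟨s₀, hs₀⟩ := hi
    rw [eval_mem i s₀ hs₀, eval_not j hj, add_zero]
    rw [Finset.sum_eq_single s₀]
    · rw [Set.indicator_of_mem hs₀, Set.indicator_of_notMem (hj s₀), add_zero, abs_mul]
    · intro b _ hb
      have hnb : i ∉ g b := fun hmem => hb (hdisj i b s₀ hmem hs₀)
      rw [Set.indicator_of_notMem hnb, Set.indicator_of_notMem (hj b), add_zero, abs_zero,
        mul_zero]
    · intro h; exact absurd (Finset.mem_univ s₀) h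
  · push_neg at hi
    obtain ⟨s₀, hs₀⟩ := hj
    rw [eval_not i hi, eval_mem j s₀ hs₀, zero_add]
    rw [Finset.sum_eq_single s₀]
    · rw [Set.indicator_of_mem hs₀, Set.indicator_of_notMem (hi s₀), zero_add, abs_mul]
    · intro b _ hb
      have hnb : j ∉ g b := fun hmem => hb (hdisj j b s₀ hmem hs₀)
      rw [Set.indicator_of_notMem hnb, Set.indicator_of_notMem (hi b), zero_add, abs_zero,
        mul_zero]
    · intro h; exact absurd (Finset.mem_univ s₀) h
  · push_neg at hi; push_neg at hj
    rw [eval_not i hi, eval_not j hj, add_zero, abs_zero]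
    symm
    apply Finset.sum_eq_zero
    intro s _
    rw [Set.indicator_of_notMem (hi s), Set.indicator_of_notMem (hj s), add_zero, abs_zero,
      mul_zero]

lemma cross_den (hdisj : ∀ (i : Fin n) (s s' : Fin N), i ∈ g s → i ∈ g s' → s = s')
    (t : Fin N → ℝ) :
    ∑ i, degR G i * |crossMap x g t i|
      = ∑ s, |t s| * (∑ i, degR G i * |(g s).indicator x i|) := by
  calc ∑ i, degR G i * |crossMap x g t i|
      = ∑ i, ∑ s, |t s| * (degR G i * |(g s).indicator x i|) := by
        apply Finset.sum_congr rfl; intro i _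
        rw [cross_abs x g hdisj t i, Finset.mul_sum]
        apply Finset.sum_congr rfl; intro s _
        ring
    _ = ∑ s, ∑ i, |t s| * (degR G i * |(g s).indicator x i|) := Finset.sum_comm
    _ = ∑ s, |t s| * (∑ i, degR G i * |(g s).indicator x i|) := by
        apply Finset.sum_congr rfl; intro s _
        rw [Finset.mul_sum]

lemma cross_num (hdisj : ∀ (i : Fin n) (s s' : Fin N), i ∈ g s → i ∈ g s' → s = s')
    (hadjg : ∀ (i j : Fin n) (s s' : Fin N), G.Adj i j → i ∈ g s → j ∈ g s' → s = s')
    (t : Fin N → ℝ) :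
    IplusU G (crossMap x g t) = ∑ s, |t s| * IplusU G ((g s).indicator x) := by
  have hnum : (∑ i, ∑ j, if G.Adj i j then |crossMap x g t i + crossMap x g t j| else 0)
      = ∑ s, |t s| * (∑ i, ∑ j, if G.Adj i j
          then |(g s).indicator x i + (g s).indicator x j| else 0) := by
    calc (∑ i, ∑ j, if G.Adj i j then |crossMap x g t i + crossMap x g t j| else 0)
        = ∑ i, ∑ j, ∑ s, (if G.Adj i j
            then |t s| * |(g s).indicator x i + (g s).indicator x j| else 0) := by
          apply Finset.sum_congr rfl; intro i _
          apply Finset.sum_congr rfl; intro j _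
          by_cases hadj : G.Adj i j
          · rw [if_pos hadj, cross_pair G x g hdisj hadjg t i j hadj]
            apply Finset.sum_congr rfl; intro s _
            rw [if_pos hadj]
          · rw [if_neg hadj]
            symm
            apply Finset.sum_eq_zero
            intro s _
            rw [if_neg hadj]
      _ = ∑ s, ∑ i, ∑ j, (if G.Adj i j
            then |t s| * |(g s).indicator x i + (g s).indicator x j| else 0) := by
          have h1 : ∀ i : Fin n, (∑ j, ∑ s, (if G.Adj i j
                then |t s| * |(g s).indicator x i + (g s).indicator x j| else 0))
              = ∑ s, ∑ j, (if G.Adj i j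
                then |t s| * |(g s).indicator x i + (g s).indicator x j| else 0) :=
            fun i => Finset.sum_comm
          simp only [h1]
          exact Finset.sum_comm
      _ = ∑ s, |t s| * (∑ i, ∑ j, if G.Adj i j
            then |(g s).indicator x i + (g s).indicator x j| else 0) := by
          apply Finset.sum_congr rfl; intro s _
          rw [Finset.mul_sum]
          apply Finset.sum_congr rfl; intro i _
          rw [Finset.mul_sum]
          apply Finset.sum_congr rfl; intro j _
          rw [mul_ite, mul_zero]
  show (∑ i, ∑ j, if G.Adj i j then |crossMap x g t i + crossMap x g t j| else 0) / 2 = _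
  rw [hnum, Finset.sum_div]
  apply Finset.sum_congr rfl; intro s _
  show |t s| * _ / 2 = |t s| * (_ / 2)
  ring

end cross

end SL7

theorem stmt7 (G : SimpleGraph (Fin n)) [DecidableRel G.Adj]
    (k r : ℕ) (hk : 1 ≤ k) (hr : 1 ≤ r) (hkr : k + r ≤ n)
    (x : Fin n → ℝ)
    (hx : IsEigenSignless G (ckSignless G k) x)
    (hlt : ckSignless G k < ckSignless G (k + r)) :
    1 ≤ nodalCount G x ∧ nodalCount G x ≤ k + r - 1 := by
  classical
  obtain ⟨hx0, z, hz_mem, hz_symm, v, hv, heq⟩ := hx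
  -- lower bound
  have hlow : 1 ≤ nodalCount G x := by
    obtain ⟨i0, hi0⟩ := Function.ne_iff.1 hx0
    have hi0' : x i0 ≠ 0 := by simpa using hi0
    have hne : {D : Set (Fin n) | IsCompIn G {i | x i ≠ 0} D}.Nonempty :=
      ⟨_, ⟨i0, hi0', rfl⟩⟩
    have hfin : {D : Set (Fin n) | IsCompIn G {i | x i ≠ 0} D}.Finite := Set.toFinite _
    exact (Set.ncard_pos hfin).2 hne
  refine ⟨hlow, ?_⟩
  by_contra hcon
  push_neg at hcon
  have hN : k + r ≤ nodalCount G x := by omega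
  -- extract k+r distinct components
  have hfin : {D : Set (Fin n) | IsCompIn G {i | x i ≠ 0} D}.Finite := Set.toFinite _
  have hcard : k + r ≤ hfin.toFinset.card := by
    rw [← Set.ncard_eq_toFinset_card _ hfin]
    exact hN
  obtain ⟨tset, htsub, htcard⟩ := Finset.exists_subset_card_eq (s := hfin.toFinset) hcard
  have e : Fin (k + r) ≃ {D // D ∈ tset} := (tset.equivFin.trans (finCongr htcard)).symm
  set g : Fin (k + r) → Set (Fin n) := fun s => (e s : Set (Fin n)) with hgdef
  have hginj : Function.Injective g := by
    intro a b hab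
    exact e.injective (Subtype.ext hab)
  have hgcomp : ∀ s, IsCompIn G {i | x i ≠ 0} (g s) := by
    intro s
    have hmem := htsub (e s).2
    rw [Set.Finite.mem_toFinset] at hmem
    exact hmem
  -- component properties
  have hgP : ∀ s, ∀ i ∈ g s, x i ≠ 0 := by
    intro s i hi
    obtain ⟨v0, hv0, hEq⟩ := hgcomp s
    rw [hEq] at hi
    exact SL7.comp_subset G {i | x i ≠ 0} hv0 hi
  have hgcl : ∀ s, ∀ i ∈ g s, ∀ j : Fin n, G.Adj i j → x j ≠ 0 → j ∈ g s := by
    intro s i hi j hadj hxj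
    obtain ⟨v0, hv0, hEq⟩ := hgcomp s
    rw [hEq] at hi ⊢
    exact SL7.comp_extend G {i | x i ≠ 0} hv0 hi hadj hxj
  have hdisj : ∀ (i : Fin n) (s s' : Fin (k+r)), i ∈ g s → i ∈ g s' → s = s' := by
    intro i s s' hi hi'
    exact hginj (SL7.comp_eq_or_disjoint G {i | x i ≠ 0} (hgcomp s) (hgcomp s') hi hi')
  have hadjg : ∀ (i j : Fin n) (s s' : Fin (k+r)), G.Adj i j → i ∈ g s → j ∈ g s' → s = s' := by
    intro i j s s' hadj hi hj
    exact hdisj j s s' (hgcl s i hi j hadj (hgP s' j hj)) hj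
  -- Rayleigh bound on the cross polytope
  have hck0 : 0 ≤ ckSignless G k := SL7.minimax_nonneg _ (SL7.rayleigh_nonneg G) k
  have hident : ∀ np, IplusU G ((g np).indicator x)
      = ckSignless G k * ∑ i, degR G i * |(g np).indicator x i| := fun np =>
    SL7.domain_identity G x _ z v hz_mem hz_symm hv heq (g np) (hgcl np)
  have hub : ∀ t : Fin (k+r) → ℝ, RayleighPlus G (SL7.crossMap x g t) ≤ ckSignless G k := by
    intro t
    have hnum : IplusU G (SL7.crossMap x g t)
        = ckSignless G k * ∑ i, degR G i * |SL7.crossMap x g t i| := by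
      rw [SL7.cross_num G x g hdisj hadjg t, SL7.cross_den G x g hdisj t, Finset.mul_sum]
      apply Finset.sum_congr rfl
      intro s _
      rw [hident s]; ring
    unfold RayleighPlus
    rw [hnum]
    by_cases h0 : (∑ i, degR G i * |SL7.crossMap x g t i|) = 0
    · rw [h0]; simpa using hck0
    · rw [mul_div_assoc, div_self h0, mul_one]
  -- the cross polytope set
  set A : Set (Fin n → ℝ) := SL7.crossMap x g '' (SL7.sphL1 (k+r)) with hAdef
  have hAcomp : IsCompact A := (SL7.sphL1_compact).image (SL7.crossMap_continuous x g)
  have hAsym : ∀ w ∈ A, -w ∈ A := by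
    rintro w ⟨t, ht, rfl⟩
    refine ⟨-t, ?_, SL7.crossMap_neg x g t⟩
    show SL7.l1 (-t) = 1
    rw [SL7.l1_neg]; exact ht
  have hA0 : (0 : Fin n → ℝ) ∉ A := by
    rintro ⟨t, ht, hteq⟩
    have ht0 : t ≠ 0 := by
      intro h
      rw [h] at ht
      have hz0 : SL7.l1 (0 : Fin (k+r) → ℝ) = 0 := by
        unfold SL7.l1; simp
      rw [show ((0:Fin (k+r) → ℝ) ∈ SL7.sphL1 (k+r)) = (SL7.l1 (0:Fin (k+r) → ℝ) = 1) from rfl,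
        hz0] at ht
      norm_num at ht
    obtain ⟨s₀, hs₀⟩ := Function.ne_iff.1 ht0
    obtain ⟨v0, hv0, hEq⟩ := hgcomp s₀
    have hv0mem : v0 ∈ g s₀ := by rw [hEq]; exact Relation.ReflTransGen.refl
    have hxv0 : x v0 ≠ 0 := hv0
    have hev : SL7.crossMap x g t v0 = 0 := congrFun hteq v0
    have habs : |SL7.crossMap x g t v0| = ∑ s, |t s| * |(g s).indicator x v0| :=
      SL7.cross_abs x g hdisj t v0
    rw [hev, abs_zero] at habs
    have hpos : 0 < |t s₀| * |(g s₀).indicator x v0| := by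
      rw [Set.indicator_of_mem hv0mem]
      have h1 : 0 < |t s₀| := abs_pos.2 (by simpa using hs₀)
      have h2 : 0 < |x v0| := abs_pos.2 hxv0
      positivity
    have hle : |t s₀| * |(g s₀).indicator x v0| ≤ ∑ s, |t s| * |(g s).indicator x v0| :=
      Finset.single_le_sum (f := fun s => |t s| * |(g s).indicator x v0|)
        (fun s _ => by positivity) (Finset.mem_univ s₀)
    linarith
  have hAub : ∀ w ∈ A, RayleighPlus G w ≤ ckSignless G k := by
    rintro w ⟨t, ht, rfl⟩
    exact hub t
  -- extraction of the odd map on A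
  have hng : ¬ GenusGe A (k + r) := by
    intro hgen
    have hle := SL7.minimax_le (RayleighPlus G) (SL7.rayleigh_nonneg G) (k+r) A hAcomp hAsym
      hA0 hgen (ckSignless G k) hck0 hAub
    have : ckSignless G (k+r) ≤ ckSignless G k := hle
    linarith
  unfold GenusGe at hng
  push_neg at hng
  obtain ⟨m, hm_odd, hm_lt⟩ := hng
  obtain ⟨f₀, hf₀c, hf₀odd, hf₀nz⟩ := hm_odd
  -- restrict to the sphere
  have hfc : ContinuousOn (fun t => f₀ (SL7.crossMap x g t)) (SL7.sphL1 (k+r)) :=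
    hf₀c.comp (SL7.crossMap_continuous x g).continuousOn (Set.mapsTo_image _ _)
  have hfodd : ∀ t ∈ SL7.sphL1 (k+r),
      (fun t => f₀ (SL7.crossMap x g t)) (-t) = -(fun t => f₀ (SL7.crossMap x g t)) t := by
    intro t ht
    show f₀ (SL7.crossMap x g (-t)) = -f₀ (SL7.crossMap x g t)
    rw [SL7.crossMap_neg]
    exact hf₀odd _ ⟨t, ht, rfl⟩
  have hfnz : ∀ t ∈ SL7.sphL1 (k+r), (fun t => f₀ (SL7.crossMap x g t)) t ≠ 0 :=
    fun t ht => hf₀nz _ ⟨t, ht, rfl⟩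
  -- descent to a global odd map
  obtain ⟨Ψ, hΨc, hΨo, hΨz⟩ := SL7.glob_descent (n := n) hm_lt _ hfc hfodd hfnz
  -- tester set of genus ≥ k+r
  have hckr_pos : 0 < ckSignless G (k + r) := lt_of_le_of_lt hck0 hlt
  obtain ⟨Astar, hAst_comp, hAst_sym, hAst_0, hAst_gen⟩ :=
    SL7.exists_genus_set (RayleighPlus G) (k + r) hckr_pos
  have hodd : HasOddMap Astar m := by
    refine ⟨Ψ, hΨc.mono ?_, fun w _ => hΨo w, fun w hw => hΨz w ?_⟩
    · intro w hw h0
      exact hAst_0 (h0 ▸ hw)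
    · intro h0
      exact hAst_0 (h0 ▸ hw)
  have := hAst_gen m hodd
  omega
end
end

section
/- Let G be a finite unweighted graph. If (μ, x) is an eigenpair of the maxcut eigenproblem (M): 0 ∈ Δ₁x − μ·vol(V)·∂‖x‖_∞, and y ∈ ℝⁿ satisfies x ⪯ y, then for every t ∈ [0,1] the pair (μ, t·x + (1−t)·y) is also an eigenpair of (M). -/
open Finset

noncomputable section

variable {n : ℕ}

/-- `(Δ₁ x)`-type row sum `Σ_{j ∼ i} z_{ij}`. -/
def rowSum (G : SimpleGraph (Fin n)) [DecidableRel G.Adj] (z : Fin n → Fin n → ℝ)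
    (i : Fin n) : ℝ :=
  ∑ j, if G.Adj i j then z i j else 0

/-- `D₊(x) = {i : x_i = ‖x‖_∞}` (the norm on `Fin n → ℝ` is the sup norm). -/
def Dplus (x : Fin n → ℝ) : Set (Fin n) := {i | x i = ‖x‖}

/-- `D₋(x) = {i : −x_i = ‖x‖_∞}`. -/
def Dminus (x : Fin n → ℝ) : Set (Fin n) := {i | -x i = ‖x‖}

/-- `D₀(x) = {i : |x_i| < ‖x‖_∞}`. -/
def Dzero (x : Fin n → ℝ) : Set (Fin n) := {i | |x i| < ‖x‖}

/-- `(μ, x)` with `x ≠ 0` is an eigenpair of the maxcut eigenproblem (M):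
`0 ∈ Δ₁x − μ·vol(V)·∂‖x‖_∞`. -/
def IsEigenM (G : SimpleGraph (Fin n)) [DecidableRel G.Adj]
    (mu : ℝ) (x : Fin n → ℝ) : Prop :=
  x ≠ 0 ∧ ∃ z : Fin n → Fin n → ℝ,
    (∀ i j, G.Adj i j → z i j ∈ Sgn (x i - x j)) ∧
    (∀ i j, z i j = - z j i) ∧
    (∀ i, i ∈ Dzero x → rowSum G z i = 0) ∧
    (∀ i, i ∈ Dplus x ∪ Dminus x →
      ∃ p ∈ Set.Icc (0 : ℝ) 1, rowSum G z i = mu * volV G * Real.sign (x i) * p) ∧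
    (∑ i, |rowSum G z i|) = mu * volV G

/-- The relation `x ⪯ y`. -/
def Preceq (x y : Fin n → ℝ) : Prop :=
  x ≠ 0 ∧ y ≠ 0 ∧ Dplus x ⊆ Dplus y ∧ Dminus x ⊆ Dminus y ∧
    (∀ i j, x i < x j → y i ≤ y j) ∧ (∀ i j, x i = x j → y i = y j)

/-!
`x ⪯ w` says that `w` is weakly ordered like `x` and attains its extreme values `±‖w‖_∞`
wherever `x` attains `±‖x‖_∞`. The certificate `z` of an eigenpair `(μ, x)` then also certifies
`(μ, w)`: the sign constraints on edges only weaken, `D₀(w) ⊆ D₀(x)`, and on the new extreme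
vertices of `w` the row sums already vanish. It remains to see that `x ⪯ t x + (1 - t) y`: on
`D₊(x) ∪ D₋(x)` both `x` and `y` are extreme with the same sign, so there `t x + (1 - t) y`
reaches the triangle-inequality bound `t ‖x‖_∞ + (1 - t) ‖y‖_∞` for its norm.
-/

theorem Sgn_subset_Sgn {u v : ℝ} (hpos : 0 < u → 0 ≤ v) (hneg : u < 0 → v ≤ 0)
    (hzero : u = 0 → v = 0) : Sgn u ⊆ Sgn v := by
  rcases lt_trichotomy u 0 with hu | rfl | hu
  · rcases (hneg hu).lt_or_eq with hv | rfl
    · simp [Sgn, hu, hv, hu.not_gt, hv.not_gt]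
    · simp [Sgn, hu, hu.not_gt]
  · rw [hzero rfl]
  · rcases (hpos hu).lt_or_eq with hv | rfl
    · simp [Sgn, hu, hv]
    · simp [Sgn, hu]

theorem abs_apply_le_norm (x : Fin n → ℝ) (i : Fin n) : |x i| ≤ ‖x‖ := by
  simpa using norm_le_pi_norm x i

theorem Dzero_eq_compl (x : Fin n → ℝ) : Dzero x = (Dplus x ∪ Dminus x)ᶜ := by
  ext i
  simp only [Dzero, Dplus, Dminus, Set.mem_ofPred_eq, Set.mem_compl_iff, Set.mem_union]
  rw [(abs_apply_le_norm x i).lt_iff_ne, Ne, abs_eq (norm_nonneg x), neg_eq_iff_eq_neg]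

theorem exists_mem_Dplus_union_Dminus {x : Fin n → ℝ} (hx : x ≠ 0) :
    ∃ i, i ∈ Dplus x ∪ Dminus x := by
  by_contra! h
  have hlt : ‖x‖ < ‖x‖ := (pi_norm_lt_iff (norm_pos_iff.2 hx)).2 fun i =>
    (Real.norm_eq_abs _).trans_lt (show i ∈ Dzero x by rw [Dzero_eq_compl]; exact h i)
  exact hlt.false

theorem sign_of_mem_Dplus {x : Fin n → ℝ} (hx : x ≠ 0) {i : Fin n} (hi : i ∈ Dplus x) :
    Real.sign (x i) = 1 :=
  Real.sign_of_pos (hi ▸ norm_pos_iff.2 hx)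

theorem sign_of_mem_Dminus {x : Fin n → ℝ} (hx : x ≠ 0) {i : Fin n} (hi : i ∈ Dminus x) :
    Real.sign (x i) = -1 :=
  Real.sign_of_neg (neg_pos.1 (hi ▸ norm_pos_iff.2 hx))

theorem IsEigenM.of_preceq {G : SimpleGraph (Fin n)} [DecidableRel G.Adj] {mu : ℝ}
    {x w : Fin n → ℝ} (hx : IsEigenM G mu x) (hxw : Preceq x w) : IsEigenM G mu w := by
  obtain ⟨hx0, z, hz, hanti, hzero, hextreme, hsum⟩ := hx
  obtain ⟨-, hw0, hplus, hminus, hlt, heq⟩ := hxw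
  have hSgn : ∀ i j, Sgn (x i - x j) ⊆ Sgn (w i - w j) := fun i j =>
    Sgn_subset_Sgn (fun h => sub_nonneg.2 (hlt j i (sub_pos.1 h)))
      (fun h => sub_nonpos.2 (hlt i j (sub_neg.1 h)))
      (fun h => sub_eq_zero.2 (heq i j (sub_eq_zero.1 h)))
  have hDzero : Dzero w ⊆ Dzero x := by
    rw [Dzero_eq_compl, Dzero_eq_compl]
    exact Set.compl_subset_compl.2 (Set.union_subset_union hplus hminus)
  refine ⟨hw0, z, fun i j hij => hSgn i j (hz i j hij), hanti,
    fun i hi => hzero i (hDzero hi), fun i _ => ?_, hsum⟩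
  by_cases hix : i ∈ Dplus x ∪ Dminus x
  · obtain ⟨p, hp, hrow⟩ := hextreme i hix
    have hsign : Real.sign (w i) = Real.sign (x i) := by
      rcases hix with hi | hi
      · rw [sign_of_mem_Dplus hw0 (hplus hi), sign_of_mem_Dplus hx0 hi]
      · rw [sign_of_mem_Dminus hw0 (hminus hi), sign_of_mem_Dminus hx0 hi]
    exact ⟨p, hp, hsign ▸ hrow⟩
  · refine ⟨0, Set.left_mem_Icc.2 zero_le_one, ?_⟩
    rw [hzero i (by rwa [Dzero_eq_compl]), mul_zero]

theorem Preceq.smul_add_smul {x y : Fin n → ℝ} (hxy : Preceq x y) {t : ℝ} (ht0 : 0 ≤ t)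
    (ht1 : t ≤ 1) : Preceq x (t • x + (1 - t) • y) := by
  obtain ⟨hx0, hy0, hplus, hminus, hlt, heq⟩ := hxy
  set w := t • x + (1 - t) • y
  set c := t * ‖x‖ + (1 - t) * ‖y‖
  have hc : 0 < c := by
    rcases ht0.eq_or_lt with rfl | ht
    · simpa [c] using hy0
    · exact add_pos_of_pos_of_nonneg (mul_pos ht (norm_pos_iff.2 hx0))
        (mul_nonneg (sub_nonneg.2 ht1) (norm_nonneg y))
  have hwplus : ∀ i ∈ Dplus x, w i = c := fun i hi => by
    simp only [w, c, Pi.add_apply, Pi.smul_apply, smul_eq_mul, hi.symm, (hplus hi).symm]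
  have hwminus : ∀ i ∈ Dminus x, w i = -c := fun i hi => by
    have hxi : -x i = ‖x‖ := hi
    have hyi : -y i = ‖y‖ := hminus hi
    simp only [w, c, Pi.add_apply, Pi.smul_apply, smul_eq_mul, ← hxi, ← hyi]
    ring
  have hnorm : ‖w‖ = c := by
    refine le_antisymm ?_ ?_
    · calc ‖w‖ ≤ ‖t • x‖ + ‖(1 - t) • y‖ := norm_add_le _ _
        _ = c := by
          rw [norm_smul, norm_smul, Real.norm_of_nonneg ht0,
            Real.norm_of_nonneg (sub_nonneg.2 ht1)]
    · obtain ⟨i, hi⟩ := exists_mem_Dplus_union_Dminus hx0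
      have hwi : |w i| = c := by
        rcases hi with hi | hi
        · rw [hwplus i hi, abs_of_pos hc]
        · rw [hwminus i hi, abs_neg, abs_of_pos hc]
      exact hwi ▸ abs_apply_le_norm w i
  refine ⟨hx0, fun h => hc.ne (by simpa [h] using hnorm), fun i hi => ?_, fun i hi => ?_,
    fun i j h => ?_, fun i j h => ?_⟩
  · exact (hwplus i hi).trans hnorm.symm
  · exact (neg_eq_iff_eq_neg.2 (hwminus i hi)).trans hnorm.symm
  · simp only [w, Pi.add_apply, Pi.smul_apply, smul_eq_mul]
    exact add_le_add (mul_le_mul_of_nonneg_left h.le ht0)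
      (mul_le_mul_of_nonneg_left (hlt i j h) (sub_nonneg.2 ht1))
  · simp only [w, Pi.add_apply, Pi.smul_apply, smul_eq_mul, h, heq i j h]

theorem stmt12 (G : SimpleGraph (Fin n)) [DecidableRel G.Adj]
    (mu : ℝ) (x y : Fin n → ℝ)
    (hx : IsEigenM G mu x) (hxy : Preceq x y) :
    ∀ t ∈ Set.Icc (0 : ℝ) 1, IsEigenM G mu (t • x + (1 - t) • y) :=
  fun _ ht => hx.of_preceq (hxy.smul_add_smul ht.1 ht.2)
end
end

section
/- Let G be a finite unweighted graph and suppose (μ, x) is an eigenpair of the maxcut eigenproblem (M): 0 ∈ Δ₁x − μ·vol(V)·∂‖x‖_∞. Let D₀¹, …, D₀^{r⁰} be the null domains of x, i.e., the vertex sets of the connected components of the subgraph induced on D₀(x). Then |E(D₊(x), D₀^ω)| = |E(D₋(x), D₀^ω)| for every ω = 1, …, r⁰. -/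
open Finset

noncomputable section

variable {n : ℕ}

open Classical in
/-- `|E(A,B)|` for sets `A, B ⊆ V`: number of ordered pairs `(i,j)` with `i ∈ A`, `j ∈ B`,
`i ∼ j` (each crossing edge counted once when `A` and `B` are disjoint). -/
def cutSet (G : SimpleGraph (Fin n)) (A B : Set (Fin n)) : ℝ :=
  ∑ i, ∑ j, if i ∈ A ∧ j ∈ B ∧ G.Adj i j then (1 : ℝ) else 0

open Classical in
/-- The ternary vector `1_{A,B}`: `+1` on `A`, `−1` on `B`, `0` elsewhere. -/
def oneST (A B : Set (Fin n)) : Fin n → ℝ :=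
  fun i => if i ∈ A then 1 else if i ∈ B then -1 else 0

/-! Summing the equations `Σ_{j ∼ i} z_{ij} = 0` over the null domain `D`, the edges inside `D`
cancel by antisymmetry of `z`, so only the edges leaving `D` remain. Since `D` is a component of
`D₀(x)`, such an edge ends in `D₊(x)` or `D₋(x)`, where the sign condition forces `z_{ij} = -1`,
resp. `z_{ij} = 1`. Hence `0 = |E(D₋, D)| - |E(D₊, D)|`. -/

theorem Finset.sum_sum_eq_zero_of_antisymm {α M : Type*} [AddCommGroup M] [IsAddTorsionFree M]
    (s : Finset α) {f : α → α → M} (hf : ∀ i j, f i j = -f j i) :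
    ∑ i ∈ s, ∑ j ∈ s, f i j = 0 :=
  self_eq_neg.mp <| calc
    ∑ i ∈ s, ∑ j ∈ s, f i j = ∑ j ∈ s, ∑ i ∈ s, f i j := Finset.sum_comm
    _ = ∑ j ∈ s, ∑ i ∈ s, -f j i :=
      Finset.sum_congr rfl fun j _ => Finset.sum_congr rfl fun i _ => hf i j
    _ = -∑ j ∈ s, ∑ i ∈ s, f j i := by simp only [Finset.sum_neg_distrib]

theorem Sgn_of_pos {t : ℝ} (ht : 0 < t) : Sgn t = {1} := if_pos ht

theorem Sgn_of_neg {t : ℝ} (ht : t < 0) : Sgn t = {-1} := by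
  rw [Sgn, if_neg ht.not_gt, if_pos ht]

section Domains

variable {x : Fin n → ℝ} {i j : Fin n}

theorem mem_Dzero_or_mem_Dplus_or_mem_Dminus (x : Fin n → ℝ) (j : Fin n) :
    j ∈ Dzero x ∨ j ∈ Dplus x ∨ j ∈ Dminus x := by
  have hj : |x j| ≤ ‖x‖ := by simpa only [Real.norm_eq_abs] using norm_le_pi_norm x j
  rcases hj.lt_or_eq with hlt | heq
  · exact Or.inl hlt
  · rcases (abs_eq (norm_nonneg x)).mp heq with h | h
    · exact Or.inr (Or.inl h)
    · exact Or.inr (Or.inr (neg_eq_iff_eq_neg.mpr h))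

theorem sub_neg_of_mem_Dzero_of_mem_Dplus (hi : i ∈ Dzero x) (hj : j ∈ Dplus x) :
    x i - x j < 0 := by
  have : x i ≤ |x i| := le_abs_self _
  simp only [Dzero, Dplus, Set.mem_ofPred_eq] at hi hj
  linarith

theorem sub_pos_of_mem_Dzero_of_mem_Dminus (hi : i ∈ Dzero x) (hj : j ∈ Dminus x) :
    0 < x i - x j := by
  have : -|x i| ≤ x i := neg_abs_le _
  simp only [Dzero, Dminus, Set.mem_ofPred_eq] at hi hj
  linarith

theorem notMem_Dplus_of_mem_Dzero (hj : j ∈ Dzero x) : j ∉ Dplus x := fun h =>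
  (sub_neg_of_mem_Dzero_of_mem_Dplus hj h).ne (sub_self _)

theorem notMem_Dminus_of_mem_Dzero (hj : j ∈ Dzero x) : j ∉ Dminus x := fun h =>
  (sub_pos_of_mem_Dzero_of_mem_Dminus hj h).ne' (sub_self _)

theorem notMem_Dminus_of_mem_Dplus (hi : i ∈ Dzero x) (hj : j ∈ Dplus x) : j ∉ Dminus x :=
  fun h => by linarith [sub_neg_of_mem_Dzero_of_mem_Dplus hi hj,
    sub_pos_of_mem_Dzero_of_mem_Dminus hi h]

end Domains

namespace IsCompIn

variable {G : SimpleGraph (Fin n)} {P D : Set (Fin n)}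

theorem subset (hD : IsCompIn G P D) : D ⊆ P := by
  obtain ⟨v, hv, rfl⟩ := hD
  intro u hu
  induction hu with
  | refl => exact hv
  | tail _ h _ => exact h.2.2

theorem mem_of_adj (hD : IsCompIn G P D) {i j : Fin n} (hi : i ∈ D) (hij : G.Adj i j)
    (hj : j ∈ P) : j ∈ D := by
  have hiP := hD.subset hi
  obtain ⟨v, -, rfl⟩ := hD
  exact Relation.ReflTransGen.tail hi ⟨hij, hiP, hj⟩

end IsCompIn

section Cut

variable (G : SimpleGraph (Fin n)) [DecidableRel G.Adj]

open Classical in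
theorem cutSet_eq_sum_compl {A B : Set (Fin n)} (hAB : Disjoint A B) :
    cutSet G A B = ∑ i ∈ univ.filter (· ∈ B), ∑ j ∈ (univ.filter (· ∈ B))ᶜ,
      if j ∈ A ∧ G.Adj i j then 1 else 0 := by
  rw [cutSet, Finset.sum_comm, Finset.sum_filter]
  refine Finset.sum_congr rfl fun i _ => ?_
  split_ifs with hi
  · rw [← Finset.sum_add_sum_compl (univ.filter (· ∈ B)), Finset.sum_eq_zero, zero_add]
    · refine Finset.sum_congr rfl fun j _ => ?_
      simp only [hi, true_and, G.adj_comm i j]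
    · intro j hj
      have hjA : j ∉ A := Set.disjoint_right.mp hAB (by simpa using hj)
      simp [hjA]
  · simp [hi]

theorem sum_rowSum_eq_sum_boundary {z : Fin n → Fin n → ℝ} (hz : ∀ i j, z i j = -z j i)
    (s : Finset (Fin n)) :
    ∑ i ∈ s, rowSum G z i = ∑ i ∈ s, ∑ j ∈ sᶜ, if G.Adj i j then z i j else 0 := by
  have hinner : ∑ i ∈ s, ∑ j ∈ s, (if G.Adj i j then z i j else 0) = 0 :=
    s.sum_sum_eq_zero_of_antisymm fun i j => by
      by_cases h : G.Adj i j
      · simp [h, h.symm, hz i j]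
      · simp [h, G.adj_comm j i]
  simp only [rowSum, ← Finset.sum_add_sum_compl s, Finset.sum_add_distrib, hinner, zero_add]

theorem cutSet_Dplus_eq_cutSet_Dminus_of_flow {x : Fin n → ℝ} {z : Fin n → Fin n → ℝ}
    (hsgn : ∀ i j, G.Adj i j → z i j ∈ Sgn (x i - x j)) (hanti : ∀ i j, z i j = -z j i)
    (hzero : ∀ i ∈ Dzero x, rowSum G z i = 0) {D : Set (Fin n)} (hD : IsCompIn G (Dzero x) D) :
    cutSet G (Dplus x) D = cutSet G (Dminus x) D := by
  classical
  set s := univ.filter (· ∈ D)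
  have hmem : ∀ i, i ∈ s ↔ i ∈ D := by simp [s]
  have hboundary : ∀ i ∈ s, ∀ j ∈ sᶜ, (if G.Adj i j then z i j else 0) =
      (if j ∈ Dminus x ∧ G.Adj i j then 1 else 0) - (if j ∈ Dplus x ∧ G.Adj i j then 1 else 0) := by
    intro i hi j hj
    have hiD : i ∈ D := (hmem i).mp hi
    have hjD : j ∉ D := by simpa [hmem] using hj
    have hi0 := hD.subset hiD
    by_cases hij : G.Adj i j
    · rcases mem_Dzero_or_mem_Dplus_or_mem_Dminus x j with hj0 | hjp | hjm
      · exact absurd (hD.mem_of_adj hiD hij hj0) hjD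
      · have hz := hsgn i j hij
        rw [Sgn_of_neg (sub_neg_of_mem_Dzero_of_mem_Dplus hi0 hjp)] at hz
        simp [hij, hjp, notMem_Dminus_of_mem_Dplus hi0 hjp, Set.mem_singleton_iff.mp hz]
      · have hz := hsgn i j hij
        rw [Sgn_of_pos (sub_pos_of_mem_Dzero_of_mem_Dminus hi0 hjm)] at hz
        have hjp : j ∉ Dplus x := fun h => notMem_Dminus_of_mem_Dplus hi0 h hjm
        simp [hij, hjm, hjp, Set.mem_singleton_iff.mp hz]
    · simp [hij]
  have hdisj : ∀ {A : Set (Fin n)}, (∀ j ∈ Dzero x, j ∉ A) → Disjoint A D := fun hA =>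
    Set.disjoint_right.mpr fun j hj => hA j (hD.subset hj)
  have hflow := sum_rowSum_eq_sum_boundary G hanti s
  rw [Finset.sum_eq_zero fun i hi => hzero i (hD.subset ((hmem i).mp hi)),
    Finset.sum_congr rfl fun i hi => Finset.sum_congr rfl (hboundary i hi)] at hflow
  simp only [Finset.sum_sub_distrib] at hflow
  rw [cutSet_eq_sum_compl G (hdisj fun _ => notMem_Dplus_of_mem_Dzero),
    cutSet_eq_sum_compl G (hdisj fun _ => notMem_Dminus_of_mem_Dzero)]
  linarith

end Cut

theorem stmt15 (G : SimpleGraph (Fin n)) [DecidableRel G.Adj]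
    (mu : ℝ) (x : Fin n → ℝ) (hx : IsEigenM G mu x)
    (D : Set (Fin n)) (hD : IsCompIn G (Dzero x) D) :
    cutSet G (Dplus x) D = cutSet G (Dminus x) D := by
  obtain ⟨-, z, hsgn, hanti, hzero, -, -⟩ := hx
  exact cutSet_Dplus_eq_cutSet_Dminus_of_flow G hsgn hanti hzero hD
end
end
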